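/- Let p be a prime and let k, n, m be natural numbers with k ≤ n and k ≤ m. Then, in ℚ_p, the sequence N ↦ (1/p^N) · ∑_{x=0}^{p^N − 1} B_{k,n}(x) · B_{k,m}(x) tends (as N → ∞) to the rational number C(n,k) C(m,k) · ∑_{l=0}^{n+m−2k} C(n+m−2k, l) (−1)^l B_{2k+l}, cast into ℚ_p. (Equivalently, ∫_{ℤ_p} B_{k,n}(x) B_{k,m}(x) dμ₁(x) = C(n,k)C(m,k) ∑_{l=0}^{n+m−2k} C(n+m−2k,l)(−1)^l B_{2k+l}.) -/

import Mathlib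

/-!
Two Bernstein polynomials of the same index `k` multiply to
`C(n,k) C(m,k) x^(2k) (1 - x)^(n+m-2k)`, and expanding `(1 - x)^(n+m-2k)` binomially reduces the
claim, by linearity, to monomials. For `x^j`, Faulhaber's formula writes the Volkenborn sum as
`g (p^N)` for a polynomial `g` with constant term `B_j`, and `p^N → 0` in `ℚ_p`.
-/

open Finset Filter Topology

theorem sum_range_pow_div {K : Type*} [Field K] [CharZero K] (j M : ℕ) (hM : M ≠ 0) :
    (∑ x ∈ range M, (x : K) ^ j) / M =
      ∑ i ∈ range (j + 1), (bernoulli i : K) * (j + 1).choose i / (j + 1) * (M : K) ^ (j - i) := by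
  have faulhaber := congrArg (Rat.cast : ℚ → K) (sum_range_pow M j)
  push_cast at faulhaber
  rw [faulhaber, sum_div]
  refine sum_congr rfl fun i hi => ?_
  rw [show j + 1 - i = j - i + 1 by grind, pow_succ]
  have : (M : K) ≠ 0 := Nat.cast_ne_zero.mpr hM
  field_simp

section Volkenborn

variable (p : ℕ) [Fact p.Prime]

noncomputable def volkenbornSum (f : ℕ → ℚ_[p]) (N : ℕ) : ℚ_[p] :=
  1 / (p : ℚ_[p]) ^ N * ∑ x ∈ range (p ^ N), f x

theorem tendsto_volkenbornSum_pow (j : ℕ) :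
    Tendsto (volkenbornSum p fun x => (x : ℚ_[p]) ^ j) atTop (𝓝 (bernoulli j : ℚ_[p])) := by
  set g : ℚ_[p] → ℚ_[p] := fun t =>
    ∑ i ∈ range (j + 1), (bernoulli i : ℚ_[p]) * (j + 1).choose i / (j + 1) * t ^ (j - i)
  have hg : volkenbornSum p (fun x => (x : ℚ_[p]) ^ j) = g ∘ fun N => (p : ℚ_[p]) ^ N := by
    funext N
    have hpN : p ^ N ≠ 0 := pow_ne_zero N (Fact.out : p.Prime).ne_zero
    simpa [volkenbornSum, g, inv_mul_eq_div] using sum_range_pow_div (K := ℚ_[p]) j _ hpN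
  have hg0 : g 0 = bernoulli j := by
    simp only [g]
    rw [sum_eq_single_of_mem j (self_mem_range_succ j)]
    · have : ((j : ℚ_[p]) + 1) ≠ 0 := Nat.cast_add_one_ne_zero j
      simp [Nat.choose_succ_self_right, this]
    · intro i hi hij
      rw [zero_pow (by grind), mul_zero]
  rw [hg, ← hg0]
  exact ((by fun_prop : Continuous g).tendsto 0).comp
    (tendsto_pow_atTop_nhds_zero_of_norm_lt_one Padic.norm_p_lt_one)

theorem volkenbornSum_sum_mul {ι : Type*} (s : Finset ι) (c : ι → ℚ_[p]) (f : ι → ℕ → ℚ_[p])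
    (N : ℕ) :
    volkenbornSum p (fun x => ∑ i ∈ s, c i * f i x) N = ∑ i ∈ s, c i * volkenbornSum p (f i) N := by
  simp only [volkenbornSum, mul_sum]
  rw [sum_comm]
  exact sum_congr rfl fun i _ => sum_congr rfl fun x _ => by ring

theorem tendsto_volkenbornSum_sum_mul_pow {ι : Type*} (s : Finset ι) (c : ι → ℚ) (e : ι → ℕ) :
    Tendsto (volkenbornSum p fun x => ∑ i ∈ s, (c i : ℚ_[p]) * (x : ℚ_[p]) ^ e i) atTop
      (𝓝 ((∑ i ∈ s, c i * bernoulli (e i) : ℚ) : ℚ_[p])) := by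
  rw [funext (volkenbornSum_sum_mul p s _ _)]
  push_cast
  exact tendsto_finsetSum s fun i _ => (tendsto_volkenbornSum_pow p (e i)).const_mul _

end Volkenborn

theorem one_sub_pow_eq_sum {R : Type*} [CommRing R] (x : R) (d : ℕ) :
    (1 - x) ^ d = ∑ l ∈ range (d + 1), (d.choose l * (-1) ^ l : R) * x ^ l := by
  rw [sub_eq_neg_add, add_pow]
  exact sum_congr rfl fun l _ => by rw [one_pow, neg_pow]; ring

theorem bernstein_mul_bernstein_eq_sum {R : Type*} [CommRing R] (x : R) {n m k : ℕ}
    (hkn : k ≤ n) (hkm : k ≤ m) :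
    (n.choose k * x ^ k * (1 - x) ^ (n - k)) * (m.choose k * x ^ k * (1 - x) ^ (m - k)) =
      ∑ l ∈ range (n + m - 2 * k + 1),
        (n.choose k * m.choose k * ((n + m - 2 * k).choose l * (-1) ^ l) : R) * x ^ (2 * k + l) := by
  have hexp : n - k + (m - k) = n + m - 2 * k := by omega
  calc (n.choose k * x ^ k * (1 - x) ^ (n - k)) * (m.choose k * x ^ k * (1 - x) ^ (m - k))
      = n.choose k * m.choose k * x ^ (2 * k) * (1 - x) ^ (n + m - 2 * k) := by
        rw [← hexp, pow_add, two_mul, pow_add]; ring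
    _ = _ := by
        rw [one_sub_pow_eq_sum, mul_sum]
        exact sum_congr rfl fun l _ => by rw [pow_add]; ring

/-- `∫_{ℤ_p} B_{k,n}(x) B_{k,m}(x) dμ₁(x)
    = C(n,k)C(m,k) ∑_{l=0}^{n+m−2k} C(n+m−2k,l)(−1)^l B_{2k+l}`. -/
theorem volkenborn_bernstein_mul (p : ℕ) [Fact p.Prime] (n m k : ℕ)
    (hkn : k ≤ n) (hkm : k ≤ m) :
    Filter.Tendsto
      (fun N : ℕ => (1 / (p : ℚ_[p]) ^ N) *
        ∑ x ∈ Finset.range (p ^ N),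
          ((n.choose k : ℚ_[p]) * (x : ℚ_[p]) ^ k * (1 - (x : ℚ_[p])) ^ (n - k)) *
          ((m.choose k : ℚ_[p]) * (x : ℚ_[p]) ^ k * (1 - (x : ℚ_[p])) ^ (m - k)))
      Filter.atTop
      (nhds (((n.choose k : ℚ) * (m.choose k : ℚ) *
        ∑ l ∈ Finset.range (n + m - 2 * k + 1),
          ((n + m - 2 * k).choose l : ℚ) * (-1 : ℚ) ^ l * bernoulli (2 * k + l) : ℚ) : ℚ_[p])) := by
  have key := tendsto_volkenbornSum_sum_mul_pow p (range (n + m - 2 * k + 1))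
    (fun l => n.choose k * m.choose k * ((n + m - 2 * k).choose l * (-1) ^ l)) (2 * k + ·)
  convert key using 1
  · funext N
    simp only [volkenbornSum, bernstein_mul_bernstein_eq_sum _ hkn hkm]
    push_cast
    rfl
  · congr 1
    push_cast
    rw [mul_sum]
    exact sum_congr rfl fun l _ => by ring
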